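/- Among linear forecasts Ŷ_s = α + βᵀX_s, the squared loss E[(Ŷ_S − Y_S)²] is minimized subject to the constraint cov[Y_S − Ŷ_S, X_S − μ_S] = 0 by the FEO forecast (α_F, β_F) with β_F = var[X_S − μ_S]⁻¹ cov[X_S − μ_S, Y_S] and α_F = E[Y_S] − β_Fᵀμ̄. -/

import Mathlib

open MeasureTheory ProbabilityTheory Matrix Finset

/-! Write `Z = X_S − μ_S`. On every stratum `{S = s}` each `Z_i` has mean zero, so `Z_i` is
uncorrelated with every function of `S`; hence `cov[X_j, Z_i] = cov[Z_j, Z_i]` and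
`var[Z] = ∑ p_s Σ_s`, which is positive definite. The constraint on `(α, β)` therefore reads
`var[Z] β = cov[Z, Y]`, forcing `β = β_F`. For a fixed slope the loss equals
`Var[βᵀX − Y] + (E[α + βᵀX − Y])²`, minimal at the intercept `α_F` that makes the mean vanish.
Square-integrability of `X` and `Y` comes from that of the residuals `r = α + βᵀX − Y`: since
`(r + 1)² − r² = 2r + 1`, the residuals are themselves integrable, hence in `L²`. -/

theorem Matrix.mulVec_eq_iff_eq_inv_mulVec {n α : Type*} [Fintype n] [DecidableEq n] [CommRing α]
    {A : Matrix n n α} (hA : IsUnit A.det) {x y : n → α} : A *ᵥ x = y ↔ x = A⁻¹ *ᵥ y := by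
  constructor <;> rintro rfl
  · rw [mulVec_mulVec, nonsing_inv_mul _ hA, one_mulVec]
  · rw [mulVec_mulVec, mul_nonsing_inv _ hA, one_mulVec]

section

variable {Ω : Type*} [MeasurableSpace Ω] {P : Measure Ω}

theorem memLp_two_of_integrable_sq_of_integrable_add_one_sq [IsFiniteMeasure P] {f : Ω → ℝ}
    (h0 : Integrable (fun ω => f ω ^ 2) P) (h1 : Integrable (fun ω => (f ω + 1) ^ 2) P) :
    MemLp f 2 P := by
  have hf : Integrable f P :=
    (((h1.sub h0).sub (integrable_const 1)).div_const 2).congr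
      (ae_of_all _ fun ω => by simp only [Pi.sub_apply]; ring)
  exact (memLp_two_iff_integrable_sq hf.aestronglyMeasurable).2 h0

theorem memLp_of_forall_integrable_sq_affine_sub [IsFiniteMeasure P] {κ : Type*} [Fintype κ]
    [DecidableEq κ] {X : Ω → κ → ℝ} {Y : Ω → ℝ}
    (hint : ∀ (a : ℝ) (b : κ → ℝ), Integrable (fun ω => (a + b ⬝ᵥ X ω - Y ω) ^ 2) P) :
    MemLp Y 2 P ∧ ∀ j, MemLp (fun ω => X ω j) 2 P := by
  have hres : ∀ a b, MemLp (fun ω => a + b ⬝ᵥ X ω - Y ω) 2 P := fun a b =>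
    memLp_two_of_integrable_sq_of_integrable_add_one_sq (hint a b)
      ((hint (a + 1) b).congr (ae_of_all _ fun ω => by ring))
  refine ⟨?_, fun j => ?_⟩
  · convert (hres 0 0).neg using 1
    funext ω
    simp
  · convert (hres 0 (Pi.single j 1)).sub (hres 0 0) using 1
    funext ω
    simp

theorem memLp_const_add_dotProduct {κ : Type*} [Fintype κ] {X : Ω → κ → ℝ} {q : ENNReal}
    [IsFiniteMeasure P] (hX : ∀ j, MemLp (fun ω => X ω j) q P) (a : ℝ) (b : κ → ℝ) :
    MemLp (fun ω => a + b ⬝ᵥ X ω) q P :=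
  (memLp_const a).add (memLp_finsetSum _ fun j _ => (hX j).const_mul (b j))

theorem integral_const_add_dotProduct [IsProbabilityMeasure P] {κ : Type*} [Fintype κ]
    {X : Ω → κ → ℝ} (hX : ∀ j, Integrable (fun ω => X ω j) P) (a : ℝ) (b : κ → ℝ) :
    ∫ ω, a + b ⬝ᵥ X ω ∂P = a + b ⬝ᵥ fun j => ∫ ω, X ω j ∂P := by
  have hbX : ∀ j, Integrable (fun ω => b j * X ω j) P := fun j => (hX j).const_mul (b j)
  simp only [dotProduct]
  rw [integral_add (integrable_const a) (integrable_finsetSum _ fun j _ => hbX j),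
    integral_finsetSum _ fun j _ => hbX j]
  simp only [integral_const, probReal_univ, one_smul, integral_const_mul]

theorem integral_sq_le_integral_add_const_sq [IsProbabilityMeasure P] {g : Ω → ℝ}
    (hg : MemLp g 2 P) (hg0 : ∫ ω, g ω ∂P = 0) (c : ℝ) :
    ∫ ω, g ω ^ 2 ∂P ≤ ∫ ω, (g ω + c) ^ 2 ∂P := by
  have hVar : ∀ f : Ω → ℝ, MemLp f 2 P → ∫ ω, f ω ^ 2 ∂P = Var[f; P] + (∫ ω, f ω ∂P) ^ 2 :=
    fun f hf => by rw [variance_eq_sub hf]; simp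
  rw [hVar g hg, hVar (fun ω => g ω + c) (hg.add (memLp_const c)),
    variance_add_const hg.aestronglyMeasurable,
    integral_add (hg.integrable one_le_two) (integrable_const c), hg0]
  simp only [integral_const, probReal_univ, one_smul, zero_add]
  nlinarith [sq_nonneg c]

theorem integral_sq_le_of_intercept_eq [IsProbabilityMeasure P] {κ : Type*} [Fintype κ]
    {X : Ω → κ → ℝ} {Y : Ω → ℝ} (hX : ∀ j, MemLp (fun ω => X ω j) 2 P) (hY : MemLp Y 2 P)
    {α₀ : ℝ} (b : κ → ℝ) (hα₀ : α₀ = ∫ ω, Y ω ∂P - b ⬝ᵥ fun j => ∫ ω, X ω j ∂P) (a : ℝ) :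
    ∫ ω, (α₀ + b ⬝ᵥ X ω - Y ω) ^ 2 ∂P ≤ ∫ ω, (a + b ⬝ᵥ X ω - Y ω) ^ 2 ∂P := by
  have hfore := memLp_const_add_dotProduct hX α₀ b
  have hmean : ∫ ω, (α₀ + b ⬝ᵥ X ω - Y ω) ∂P = 0 := by
    rw [integral_sub (hfore.integrable one_le_two) (hY.integrable one_le_two),
      integral_const_add_dotProduct (fun j => (hX j).integrable one_le_two), hα₀]
    ring
  have hres : MemLp (fun ω => α₀ + b ⬝ᵥ X ω - Y ω) 2 P := hfore.sub hY
  convert integral_sq_le_integral_add_const_sq hres hmean (a - α₀) using 3 with ω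
  ring

theorem covariance_sub_const_add_dotProduct_left [IsProbabilityMeasure P] {κ : Type*}
    [Fintype κ] {X : Ω → κ → ℝ} {Y W : Ω → ℝ} (hX : ∀ j, MemLp (fun ω => X ω j) 2 P)
    (hY : MemLp Y 2 P) (hW : MemLp W 2 P) (a : ℝ) (b : κ → ℝ) :
    cov[fun ω => Y ω - (a + b ⬝ᵥ X ω), W; P]
      = cov[Y, W; P] - (fun j => cov[fun ω => X ω j, W; P]) ⬝ᵥ b := by
  have hbX : ∀ j, MemLp (fun ω => b j * X ω j) 2 P := fun j => (hX j).const_mul (b j)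
  have hdot : MemLp (fun ω => b ⬝ᵥ X ω) 2 P := memLp_finsetSum _ fun j _ => hbX j
  rw [covariance_fun_sub_left hY (memLp_const_add_dotProduct hX a b) hW,
    covariance_const_add_left (hdot.integrable one_le_two),
    show (fun ω => b ⬝ᵥ X ω) = fun ω => ∑ j, b j * X ω j from rfl,
    covariance_fun_sum_left hbX hW]
  simp only [covariance_const_mul_left, dotProduct]
  simp_rw [mul_comm]

section Fiber

variable {ι : Type*} [MeasurableSpace ι] [MeasurableSingletonClass ι] {S : Ω → ι} {p : ι → ℝ}

theorem setIntegral_fiber_comp (hS : Measurable S) (F : ι → Ω → ℝ) (s : ι) :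
    ∫ ω in {ω | S ω = s}, F (S ω) ω ∂P = ∫ ω in {ω | S ω = s}, F s ω ∂P :=
  setIntegral_congr_fun (hS (measurableSet_singleton s)) fun ω (hω : S ω = s) => by rw [hω]

theorem setIntegral_fiber_sub_mean_eq_zero [IsFiniteMeasure P] (hS : Measurable S)
    (hp : ∀ s, 0 ≤ p s) (hmeas : ∀ s, P {ω | S ω = s} = ENNReal.ofReal (p s))
    {V : Ω → ℝ} {m : ι → ℝ} (hV : Integrable V P)
    (hmean : ∀ s, ∫ ω in {ω | S ω = s}, V ω ∂P = p s * m s) (s : ι) :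
    ∫ ω in {ω | S ω = s}, (V ω - m (S ω)) ∂P = 0 := by
  rw [setIntegral_fiber_comp hS (fun s ω => V ω - m s),
    integral_sub hV.integrableOn (integrable_const _).integrableOn, hmean, setIntegral_const,
    smul_eq_mul, measureReal_def, hmeas, ENNReal.toReal_ofReal (hp s), sub_self]

variable [Fintype ι]

theorem integral_eq_sum_setIntegral_fiber (hS : Measurable S) {f : Ω → ℝ} (hf : Integrable f P) :
    ∫ ω, f ω ∂P = ∑ s, ∫ ω in {ω | S ω = s}, f ω ∂P := by
  have hdisj : Pairwise (Function.onFun Disjoint fun s => {ω | S ω = s}) :=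
    fun s t hst => Set.disjoint_left.2 fun ω hs ht => hst (hs.symm.trans ht)
  have hcover : (⋃ s, {ω | S ω = s}) = Set.univ := Set.iUnion_eq_univ_iff.2 fun ω => ⟨S ω, rfl⟩
  rw [← setIntegral_univ, ← hcover]
  exact integral_iUnion_fintype (fun s => hS (measurableSet_singleton s)) hdisj
    fun _ => hf.integrableOn

theorem integral_eq_zero_of_setIntegral_fiber (hS : Measurable S) {Z : Ω → ℝ}
    (hZ : Integrable Z P) (hfib : ∀ s, ∫ ω in {ω | S ω = s}, Z ω ∂P = 0) :
    ∫ ω, Z ω ∂P = 0 := by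
  rw [integral_eq_sum_setIntegral_fiber hS hZ]
  exact Finset.sum_eq_zero fun s _ => hfib s

theorem memLp_comp_of_finite [IsFiniteMeasure P] (hS : Measurable S) (g : ι → ℝ) (q : ENNReal) :
    MemLp (fun ω => g (S ω)) q P := by
  obtain ⟨C, hC⟩ := Finite.exists_le fun s => ‖g s‖
  exact MemLp.of_bound ((measurable_of_finite g).comp hS).aestronglyMeasurable C
    (ae_of_all _ fun ω => hC (S ω))

theorem integral_comp_mul_eq_zero (hS : Measurable S) {Z : Ω → ℝ} (hZ : Integrable Z P)
    (hfib : ∀ s, ∫ ω in {ω | S ω = s}, Z ω ∂P = 0) (h : ι → ℝ) :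
    ∫ ω, h (S ω) * Z ω ∂P = 0 := by
  obtain ⟨C, hC⟩ := Finite.exists_le fun s => ‖h s‖
  have hhZ : Integrable (fun ω => h (S ω) * Z ω) P :=
    hZ.bdd_mul ((measurable_of_finite h).comp hS).aestronglyMeasurable
      (ae_of_all _ fun ω => hC (S ω))
  rw [integral_eq_sum_setIntegral_fiber hS hhZ]
  refine Finset.sum_eq_zero fun s _ => ?_
  rw [setIntegral_fiber_comp hS (fun s ω => h s * Z ω), integral_const_mul, hfib s, mul_zero]

theorem covariance_comp_eq_zero [IsProbabilityMeasure P] (hS : Measurable S) {Z : Ω → ℝ}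
    (hZ : Integrable Z P) (hfib : ∀ s, ∫ ω in {ω | S ω = s}, Z ω ∂P = 0) (g : ι → ℝ) :
    cov[fun ω => g (S ω), Z; P] = 0 := by
  simp only [covariance, integral_eq_zero_of_setIntegral_fiber hS hZ hfib, sub_zero]
  exact integral_comp_mul_eq_zero hS hZ hfib fun s => g s - ∫ ω, g (S ω) ∂P

theorem covariance_sub_comp_left [IsProbabilityMeasure P] (hS : Measurable S) {V W : Ω → ℝ}
    (hV : MemLp V 2 P) (hW : MemLp W 2 P) (hfib : ∀ s, ∫ ω in {ω | S ω = s}, W ω ∂P = 0)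
    (g : ι → ℝ) :
    cov[fun ω => V ω - g (S ω), W; P] = cov[V, W; P] := by
  rw [covariance_fun_sub_left hV (memLp_comp_of_finite hS g 2) hW,
    covariance_comp_eq_zero hS (hW.integrable one_le_two) hfib, sub_zero]

theorem integral_eq_sum_mul_of_setIntegral_fiber (hS : Measurable S) {V : Ω → ℝ} {m : ι → ℝ}
    (hV : Integrable V P) (hmean : ∀ s, ∫ ω in {ω | S ω = s}, V ω ∂P = p s * m s) :
    ∫ ω, V ω ∂P = ∑ s, p s * m s := by
  rw [integral_eq_sum_setIntegral_fiber hS hV]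
  exact Finset.sum_congr rfl fun s _ => hmean s

theorem covariance_sub_mean_eq_sum [IsProbabilityMeasure P] (hS : Measurable S)
    {V V' : Ω → ℝ} {m m' c : ι → ℝ} (hV : MemLp V 2 P) (hV' : MemLp V' 2 P)
    (hfib : ∀ s, ∫ ω in {ω | S ω = s}, (V ω - m (S ω)) ∂P = 0)
    (hcov : ∀ s, ∫ ω in {ω | S ω = s}, (V ω - m s) * (V' ω - m' s) ∂P = p s * c s) :
    cov[fun ω => V ω - m (S ω), fun ω => V' ω - m' (S ω); P] = ∑ s, p s * c s := by
  have hZ : MemLp (fun ω => V ω - m (S ω)) 2 P := hV.sub (memLp_comp_of_finite hS m 2)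
  have hZ' : MemLp (fun ω => V' ω - m' (S ω)) 2 P := hV'.sub (memLp_comp_of_finite hS m' 2)
  rw [covariance_eq_sub hZ hZ', integral_eq_zero_of_setIntegral_fiber hS
    (hZ.integrable one_le_two) hfib, zero_mul, sub_zero]
  exact integral_eq_sum_mul_of_setIntegral_fiber hS (hZ.integrable_mul hZ') fun s =>
    (setIntegral_fiber_comp hS (fun s ω => (V ω - m s) * (V' ω - m' s)) s).trans (hcov s)

theorem covariance_sub_affine_sub_mean [IsProbabilityMeasure P] (hS : Measurable S)
    {κ : Type*} [Fintype κ] {X : Ω → κ → ℝ} {Y : Ω → ℝ} {μv : ι → κ → ℝ}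
    (hX : ∀ j, MemLp (fun ω => X ω j) 2 P) (hY : MemLp Y 2 P)
    (hfib : ∀ i s, ∫ ω in {ω | S ω = s}, (X ω i - μv (S ω) i) ∂P = 0) (a : ℝ) (b : κ → ℝ)
    (i : κ) :
    cov[fun ω => Y ω - (a + b ⬝ᵥ X ω), fun ω => X ω i - μv (S ω) i; P]
      = cov[fun ω => X ω i - μv (S ω) i, Y; P]
        - (fun j => cov[fun ω => X ω i - μv (S ω) i, fun ω => X ω j - μv (S ω) j; P]) ⬝ᵥ b := by
  have hZ : MemLp (fun ω => X ω i - μv (S ω) i) 2 P :=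
    (hX i).sub (memLp_comp_of_finite hS (fun s => μv s i) 2)
  rw [covariance_sub_const_add_dotProduct_left hX hY hZ, covariance_comm Y]
  congr 2
  funext j
  rw [covariance_comm (fun ω => X ω i - μv (S ω) i)]
  exact (covariance_sub_comp_left hS (hX j) hZ (hfib i) fun s => μv s j).symm

end Fiber

end

theorem stmt12_general
    {Ω : Type*} [MeasurableSpace Ω] (P : Measure Ω) [IsProbabilityMeasure P]
    (n d : ℕ) (S : Ω → Fin (n + 1)) (hS : Measurable S)
    (X : Ω → Fin d → ℝ) (Y : Ω → ℝ)
    (p : Fin (n + 1) → ℝ) (μv : Fin (n + 1) → Fin d → ℝ)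
    (Sig : Fin (n + 1) → Matrix (Fin d) (Fin d) ℝ)
    (hp : ∀ s, 0 < p s)
    (hmeas : ∀ s, P {ω | S ω = s} = ENNReal.ofReal (p s))
    (hmean : ∀ s i, ∫ ω in {ω | S ω = s}, X ω i ∂P = p s * μv s i)
    (hcovX : ∀ s i j,
      ∫ ω in {ω | S ω = s}, (X ω i - μv s i) * (X ω j - μv s j) ∂P = p s * Sig s i j)
    (hSigPD : ∀ s, (Sig s).PosDef)
    (μbar : Fin d → ℝ) (hμbar : μbar = ∑ s, p s • μv s)
    (hint : ∀ (a : ℝ) (b : Fin d → ℝ),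
      Integrable (fun ω => (a + b ⬝ᵥ X ω - Y ω) ^ 2) P)
    -- `var[X_S − μ_S]` and `cov[X_S − μ_S, Y_S]`
    (Vc : Matrix (Fin d) (Fin d) ℝ)
    (hVc : ∀ i j, Vc i j =
      (∫ ω, (X ω i - μv (S ω) i) * (X ω j - μv (S ω) j) ∂P)
        - (∫ ω, (X ω i - μv (S ω) i) ∂P) * (∫ ω, (X ω j - μv (S ω) j) ∂P))
    (cv : Fin d → ℝ)
    (hcv : ∀ i, cv i =
      (∫ ω, (X ω i - μv (S ω) i) * Y ω ∂P)
        - (∫ ω, (X ω i - μv (S ω) i) ∂P) * (∫ ω, Y ω ∂P))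
    (βF : Fin d → ℝ) (hβF : βF = Vc⁻¹ *ᵥ cv)
    (αF : ℝ) (hαF : αF = (∫ ω, Y ω ∂P) - βF ⬝ᵥ μbar) :
    -- the FEO forecast satisfies the constraint
    (∀ i, (∫ ω, (Y ω - (αF + βF ⬝ᵥ X ω)) * (X ω i - μv (S ω) i) ∂P)
        - (∫ ω, (Y ω - (αF + βF ⬝ᵥ X ω)) ∂P) * (∫ ω, (X ω i - μv (S ω) i) ∂P) = 0) ∧
    -- and minimizes the squared loss among all constrained linear forecasts
    (∀ (a : ℝ) (b : Fin d → ℝ),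
      (∀ i, (∫ ω, (Y ω - (a + b ⬝ᵥ X ω)) * (X ω i - μv (S ω) i) ∂P)
          - (∫ ω, (Y ω - (a + b ⬝ᵥ X ω)) ∂P) * (∫ ω, (X ω i - μv (S ω) i) ∂P) = 0) →
      ∫ ω, (αF + βF ⬝ᵥ X ω - Y ω) ^ 2 ∂P ≤ ∫ ω, (a + b ⬝ᵥ X ω - Y ω) ^ 2 ∂P) := by
  obtain ⟨hYL, hXL⟩ := memLp_of_forall_integrable_sq_affine_sub hint
  have hZL : ∀ i, MemLp (fun ω => X ω i - μv (S ω) i) 2 P := fun i =>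
    (hXL i).sub (memLp_comp_of_finite hS (fun s => μv s i) 2)
  have hfib : ∀ i s, ∫ ω in {ω | S ω = s}, (X ω i - μv (S ω) i) ∂P = 0 := fun i =>
    setIntegral_fiber_sub_mean_eq_zero hS (fun s => (hp s).le) hmeas
      ((hXL i).integrable one_le_two) fun s => hmean s i
  have hVcov : Vc = of fun i j =>
      cov[fun ω => X ω i - μv (S ω) i, fun ω => X ω j - μv (S ω) j; P] :=
    ext fun i j => (hVc i j).trans (covariance_eq_sub (hZL i) (hZL j)).symm
  have hVcPD : Vc.PosDef := by
    convert posDef_sum univ_nonempty fun s _ => (hSigPD s).smul (hp s)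
    ext i j
    rw [hVcov, of_apply, covariance_sub_mean_eq_sum hS (hXL i) (hXL j) (hfib i)
      fun s => hcovX s i j]
    simp [Matrix.sum_apply]
  have hcon : ∀ a b i, (∫ ω, (Y ω - (a + b ⬝ᵥ X ω)) * (X ω i - μv (S ω) i) ∂P)
      - (∫ ω, (Y ω - (a + b ⬝ᵥ X ω)) ∂P) * (∫ ω, (X ω i - μv (S ω) i) ∂P)
      = cv i - (Vc *ᵥ b) i := fun a b i => by
    have hres : MemLp (fun ω => Y ω - (a + b ⬝ᵥ X ω)) 2 P :=
      hYL.sub (memLp_const_add_dotProduct hXL a b)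
    refine (covariance_eq_sub hres (hZL i)).symm.trans ?_
    rw [covariance_sub_affine_sub_mean hS hXL hYL hfib, hcv, hVcov, covariance_eq_sub (hZL i) hYL]
    rfl
  have hsolve : ∀ b, Vc *ᵥ b = cv ↔ b = βF := fun b =>
    hβF ▸ mulVec_eq_iff_eq_inv_mulVec hVcPD.det_pos.ne'.isUnit
  refine ⟨fun i => by rw [hcon, (hsolve βF).2 rfl, sub_self], fun a b hb => ?_⟩
  obtain rfl : b = βF :=
    (hsolve b).1 (funext fun i => (sub_eq_zero.1 ((hcon a b i).symm.trans (hb i))).symm)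
  refine integral_sq_le_of_intercept_eq hXL hYL b (hαF.trans ?_) a
  congr 2
  funext j
  rw [integral_eq_sum_mul_of_setIntegral_fiber hS ((hXL j).integrable one_le_two)
    fun s => hmean s j, hμbar]
  simp [Finset.sum_apply]

/-- Among linear forecasts `Ŷ = α + βᵀX_S`, the squared loss `E[(Ŷ − Y_S)²]` is minimized
subject to `cov[Y_S − Ŷ, X_S − μ_S] = 0` by the FEO forecast `(α_F, β_F)` with
`β_F = var[X_S − μ_S]⁻¹ cov[X_S − μ_S, Y_S]` and `α_F = E[Y_S] − β_Fᵀμ̄`. -/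
theorem stmt12
    {Ω : Type*} [MeasurableSpace Ω] (P : Measure Ω) [IsProbabilityMeasure P]
    (n d : ℕ) (S : Ω → Fin (n + 1)) (hS : Measurable S)
    (X : Ω → Fin d → ℝ) (Y : Ω → ℝ) (ε : Ω → ℝ)
    (p : Fin (n + 1) → ℝ) (μv : Fin (n + 1) → Fin d → ℝ)
    (Sig : Fin (n + 1) → Matrix (Fin d) (Fin d) ℝ)
    (αb : Fin (n + 1) → ℝ) (βb : Fin (n + 1) → Fin d → ℝ)
    (hp : ∀ s, 0 < p s)
    (hmeas : ∀ s, P {ω | S ω = s} = ENNReal.ofReal (p s))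
    (hmean : ∀ s i, ∫ ω in {ω | S ω = s}, X ω i ∂P = p s * μv s i)
    (hcovX : ∀ s i j,
      ∫ ω in {ω | S ω = s}, (X ω i - μv s i) * (X ω j - μv s j) ∂P = p s * Sig s i j)
    (hSigPD : ∀ s, (Sig s).PosDef)
    (hY : ∀ ω, Y ω = αb (S ω) + βb (S ω) ⬝ᵥ X ω + ε ω)
    (hε : ∀ s, ∫ ω in {ω | S ω = s}, ε ω ∂P = 0)
    (hXε : ∀ s i, ∫ ω in {ω | S ω = s}, (X ω i - μv s i) * ε ω ∂P = 0)
    (μbar : Fin d → ℝ) (hμbar : μbar = ∑ s, p s • μv s)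
    (hint : ∀ (a : ℝ) (b : Fin d → ℝ),
      Integrable (fun ω => (a + b ⬝ᵥ X ω - Y ω) ^ 2) P)
    -- `var[X_S − μ_S]` and `cov[X_S − μ_S, Y_S]`
    (Vc : Matrix (Fin d) (Fin d) ℝ)
    (hVc : ∀ i j, Vc i j =
      (∫ ω, (X ω i - μv (S ω) i) * (X ω j - μv (S ω) j) ∂P)
        - (∫ ω, (X ω i - μv (S ω) i) ∂P) * (∫ ω, (X ω j - μv (S ω) j) ∂P))
    (cv : Fin d → ℝ)
    (hcv : ∀ i, cv i =
      (∫ ω, (X ω i - μv (S ω) i) * Y ω ∂P)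
        - (∫ ω, (X ω i - μv (S ω) i) ∂P) * (∫ ω, Y ω ∂P))
    (βF : Fin d → ℝ) (hβF : βF = Vc⁻¹ *ᵥ cv)
    (αF : ℝ) (hαF : αF = (∫ ω, Y ω ∂P) - βF ⬝ᵥ μbar) :
    -- the FEO forecast satisfies the constraint
    (∀ i, (∫ ω, (Y ω - (αF + βF ⬝ᵥ X ω)) * (X ω i - μv (S ω) i) ∂P)
        - (∫ ω, (Y ω - (αF + βF ⬝ᵥ X ω)) ∂P) * (∫ ω, (X ω i - μv (S ω) i) ∂P) = 0) ∧
    -- and minimizes the squared loss among all constrained linear forecasts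
    (∀ (a : ℝ) (b : Fin d → ℝ),
      (∀ i, (∫ ω, (Y ω - (a + b ⬝ᵥ X ω)) * (X ω i - μv (S ω) i) ∂P)
          - (∫ ω, (Y ω - (a + b ⬝ᵥ X ω)) ∂P) * (∫ ω, (X ω i - μv (S ω) i) ∂P) = 0) →
      ∫ ω, (αF + βF ⬝ᵥ X ω - Y ω) ^ 2 ∂P ≤ ∫ ω, (a + b ⬝ᵥ X ω - Y ω) ^ 2 ∂P) :=
  stmt12_general P n d S hS X Y p μv Sig hp hmeas hmean hcovX hSigPD μbar hμbar hint Vc hVc cv hcv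
    βF hβF αF hαF
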